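/- arXiv:1605.05724 — 2 statements merged into one kernel-verified Lean document; each statement's English description precedes it below -/
import Mathlib

section
/- Let C be a conjugation on a complex Hilbert space H. A rank-one operator x ⊗ y is C-symmetric (C(x ⊗ y)C = (x ⊗ y)*) if and only if it has the form α·(h ⊗ Ch) for some h ∈ H and α ∈ ℂ. -/
/-!
Evaluating `C (x ⊗ y) C = (x ⊗ y)* = y ⊗ x` at `x` gives `⟪x, x⟫ y = conj ⟪y, C x⟫ C x`, so for
`x ≠ 0` the vector `y` is a multiple of `C x`. Conversely `h ⊗ C h` is `C`-symmetric because
`⟪C h, C z⟫ = ⟪z, h⟫`, and `C`-symmetry is preserved by scalar multiples.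
-/

open scoped InnerProductSpace ComplexConjugate

/-- The rank-one operator `x ⊗ y`, acting by `z ↦ ⟨z, y⟩ • x`. -/
noncomputable def rankOne {H : Type*} [NormedAddCommGroup H] [InnerProductSpace ℂ H]
    (x y : H) : H →L[ℂ] H :=
  (ContinuousLinearMap.toSpanSingleton ℂ x).comp (innerSL ℂ y)

section CSymmetric

variable {H : Type*} [NormedAddCommGroup H] [InnerProductSpace ℂ H]

lemma rankOne_apply (x y z : H) : rankOne x y z = ⟪y, z⟫_ℂ • x := rfl

lemma rankOne_smul_right (c : ℂ) (x y : H) : rankOne x (c • y) = conj c • rankOne x y := by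
  ext z
  simp only [rankOne_apply, smul_apply, inner_smul_left, smul_smul]

lemma rankOne_zero_left (y : H) : rankOne 0 y = 0 := by
  ext z
  simp only [rankOne_apply, smul_zero, zero_apply]

variable [CompleteSpace H]

lemma adjoint_rankOne (x y : H) : ContinuousLinearMap.adjoint (rankOne x y) = rankOne y x := by
  refine ((ContinuousLinearMap.eq_adjoint_iff _ _).mpr fun u v => ?_).symm
  simp only [rankOne_apply, inner_smul_left, inner_smul_right, inner_conj_symm]
  ring

def IsCSymmetric (C : H → H) (T : H →L[ℂ] H) : Prop :=
  ∀ z, C (T (C z)) = ContinuousLinearMap.adjoint T z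

variable {C : H → H} (hCsmul : ∀ (a : ℂ) (x : H), C (a • x) = conj a • C x)
include hCsmul

lemma IsCSymmetric.smul {T : H →L[ℂ] H} (hT : IsCSymmetric C T) (α : ℂ) :
    IsCSymmetric C (α • T) := by
  intro z
  rw [smul_apply, hCsmul, hT z, map_smulₛₗ, smul_apply]

lemma isCSymmetric_rankOne_self (hCinner : ∀ x y : H, ⟪C x, C y⟫_ℂ = ⟪y, x⟫_ℂ) (w : H) :
    IsCSymmetric C (rankOne w (C w)) := by
  intro z
  rw [adjoint_rankOne, rankOne_apply, rankOne_apply, hCsmul, hCinner, inner_conj_symm]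

lemma exists_eq_smul_of_isCSymmetric_rankOne {x y : H} (hx : x ≠ 0)
    (h : IsCSymmetric C (rankOne x y)) : ∃ c : ℂ, y = c • C x := by
  have hxx : ⟪x, x⟫_ℂ ≠ 0 := inner_self_ne_zero.mpr hx
  have key : conj ⟪y, C x⟫_ℂ • C x = ⟪x, x⟫_ℂ • y := by
    simpa only [adjoint_rankOne, rankOne_apply, hCsmul] using h x
  refine ⟨(⟪x, x⟫_ℂ)⁻¹ * conj ⟪y, C x⟫_ℂ, ?_⟩
  rw [mul_smul, key, smul_smul, inv_mul_cancel₀ hxx, one_smul]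

end CSymmetric

theorem stmt5_general {H : Type*} [NormedAddCommGroup H] [InnerProductSpace ℂ H] [CompleteSpace H]
    (C : H → H)
    (hCsmul : ∀ (a : ℂ) (x : H), C (a • x) = (starRingEnd ℂ) a • C x)
    (hCinner : ∀ x y : H, ⟪C x, C y⟫_ℂ = ⟪y, x⟫_ℂ)
    (x y : H) :
    (∀ z, C ((rankOne x y) (C z)) = (ContinuousLinearMap.adjoint (rankOne x y)) z) ↔
      ∃ (α : ℂ) (w : H), rankOne x y = α • rankOne w (C w) := by
  constructor
  · intro h
    rcases eq_or_ne x 0 with rfl | hx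
    · exact ⟨0, 0, by rw [rankOne_zero_left, rankOne_zero_left, smul_zero]⟩
    · obtain ⟨c, rfl⟩ := exists_eq_smul_of_isCSymmetric_rankOne hCsmul hx h
      exact ⟨conj c, x, rankOne_smul_right c x (C x)⟩
  · rintro ⟨α, w, hw⟩
    rw [hw]
    exact (isCSymmetric_rankOne_self hCsmul hCinner w).smul hCsmul α

theorem stmt5 {H : Type*} [NormedAddCommGroup H] [InnerProductSpace ℂ H] [CompleteSpace H]
    (C : H → H)
    (hCadd : ∀ x y, C (x + y) = C x + C y)
    (hCsmul : ∀ (a : ℂ) (x : H), C (a • x) = (starRingEnd ℂ) a • C x)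
    (hCinner : ∀ x y : H, ⟪C x, C y⟫_ℂ = ⟪y, x⟫_ℂ)
    (hCinv : ∀ x, C (C x) = x)
    (x y : H) :
    (∀ z, C ((rankOne x y) (C z)) = (ContinuousLinearMap.adjoint (rankOne x y)) z) ↔
      ∃ (α : ℂ) (w : H), rankOne x y = α • rankOne w (C w) :=
  stmt5_general C hCsmul hCinner x y
end

section
/- Let C be a conjugation on a complex Hilbert space H and A ∈ B(H). Then ‖A + CA*C‖ ≤ sup{|⟨Ah, Ch⟩| + |⟨Ag, Cg⟩| + 4|⟨A((h+g)/2), C((h+g)/2)⟩| : ‖h‖ ≤ 1, ‖g‖ ≤ 1} ≤ 6·sup{|⟨Ah, Ch⟩| : ‖h‖ ≤ 1}. -/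
/-!
Write `q x = ⟪C x, A x⟫` and `M = A + C A* C`. Since `C` is antiunitary, `⟪C h, C A* C g⟫ = ⟪C g, A h⟫`,
so `⟪C h, M g⟫ = ⟪C h, A g⟫ + ⟪C g, A h⟫` is the polarization of the quadratic form `q`, which equals
`4 q((h + g)/2) - q h - q g`. As `C` maps the unit ball onto itself, `‖M‖` is the supremum of
`|⟪C h, M g⟫|` over the unit ball, giving the first bound; the three arguments of `q` lie in the
unit ball, giving the second.
-/

open scoped InnerProductSpace ComplexConjugate

theorem ContinuousLinearMap.opNorm_le_of_norm_inner_le {𝕜 E F : Type*} [RCLike 𝕜]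
    [NormedAddCommGroup E] [NormedSpace 𝕜 E] [NormedAddCommGroup F] [InnerProductSpace 𝕜 F]
    (T : E →L[𝕜] F) {c : ℝ} (h : ∀ x y, ‖x‖ ≤ 1 → ‖y‖ ≤ 1 → ‖⟪y, T x⟫_𝕜‖ ≤ c) : ‖T‖ ≤ c := by
  have hc : 0 ≤ c := by simpa using h 0 0
  refine T.opNorm_le_of_unit_norm hc fun x hx => ?_
  rw [← innerSL_apply_norm 𝕜]
  refine (innerSL 𝕜 (T x)).opNorm_le_of_unit_norm hc fun y hy => ?_
  rw [innerSL_apply_apply, norm_inner_symm]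
  exact h x y hx.le hy.le

theorem norm_four_mul_sub_sub_le (p a b : ℂ) : ‖4 * p - a - b‖ ≤ ‖a‖ + ‖b‖ + 4 * ‖p‖ :=
  calc ‖4 * p - a - b‖ ≤ ‖4 * p‖ + ‖a‖ + ‖b‖ :=
        (norm_sub_le _ _).trans (by gcongr; exact norm_sub_le _ _)
    _ = ‖a‖ + ‖b‖ + 4 * ‖p‖ := by rw [norm_mul, RCLike.norm_ofNat]; ring

section Conjugation

variable {H : Type*} [NormedAddCommGroup H] [InnerProductSpace ℂ H] {C : H → H}

theorem norm_eq_of_inner_map_map (hC : ∀ x y : H, ⟪C x, C y⟫_ℂ = ⟪y, x⟫_ℂ) (x : H) :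
    ‖C x‖ = ‖x‖ := by
  rw [@norm_eq_sqrt_re_inner ℂ, @norm_eq_sqrt_re_inner ℂ, hC]

theorem norm_inner_map_apply_le (hC : ∀ x, ‖C x‖ = ‖x‖) (A : H →L[ℂ] H) {x : H} (hx : ‖x‖ ≤ 1) :
    ‖⟪C x, A x⟫_ℂ‖ ≤ ‖A‖ :=
  calc ‖⟪C x, A x⟫_ℂ‖ ≤ ‖C x‖ * ‖A x‖ := norm_inner_le_norm _ _
    _ ≤ 1 * (‖A‖ * 1) := by
      rw [hC]
      gcongr
      exact (A.le_opNorm x).trans (by gcongr)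
    _ = ‖A‖ := by ring

theorem inner_map_add_inner_map_swap (hCadd : ∀ x y, C (x + y) = C x + C y)
    (hCsmul : ∀ (a : ℂ) (x : H), C (a • x) = conj a • C x) {F : Type*} [FunLike F H H]
    [LinearMapClass F ℂ H H] (A : F) (h g : H) :
    ⟪C h, A g⟫_ℂ + ⟪C g, A h⟫_ℂ =
      4 * ⟪C ((1/2 : ℂ) • (h + g)), A ((1/2 : ℂ) • (h + g))⟫_ℂ - ⟪C h, A h⟫_ℂ - ⟪C g, A g⟫_ℂ := by
  have hhalf : conj (1/2 : ℂ) = 1/2 := by rw [map_div₀, map_one, map_ofNat]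
  rw [hCsmul, hhalf, map_smul, inner_smul_left, inner_smul_right, hhalf, hCadd, map_add,
    inner_add_left, inner_add_right, inner_add_right]
  ring

theorem inner_map_map_adjoint_map [CompleteSpace H] (hC : ∀ x y : H, ⟪C x, C y⟫_ℂ = ⟪y, x⟫_ℂ)
    (A : H →L[ℂ] H) (h g : H) :
    ⟪C h, C (ContinuousLinearMap.adjoint A (C g))⟫_ℂ = ⟪C g, A h⟫_ℂ := by
  rw [hC, ContinuousLinearMap.adjoint_inner_left]

theorem norm_half_smul_add_le_one {h g : H} (hh : ‖h‖ ≤ 1) (hg : ‖g‖ ≤ 1) :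
    ‖(1/2 : ℂ) • (h + g)‖ ≤ 1 := by
  rw [norm_smul]
  calc ‖(1/2 : ℂ)‖ * ‖h + g‖ ≤ 1/2 * (1 + 1) := by
        rw [norm_div, norm_one, RCLike.norm_ofNat]
        gcongr
        exact (norm_add_le h g).trans (add_le_add hh hg)
    _ = 1 := by norm_num

end Conjugation

theorem stmt13 {H : Type*} [NormedAddCommGroup H] [InnerProductSpace ℂ H] [CompleteSpace H]
    (C : H → H)
    (hCadd : ∀ x y, C (x + y) = C x + C y)
    (hCsmul : ∀ (a : ℂ) (x : H), C (a • x) = (starRingEnd ℂ) a • C x)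
    (hCinner : ∀ x y : H, ⟪C x, C y⟫_ℂ = ⟪y, x⟫_ℂ)
    (hCinv : ∀ x, C (C x) = x)
    (A M : H →L[ℂ] H)
    (hM : ∀ x, M x = A x + C ((ContinuousLinearMap.adjoint A) (C x))) :
    ‖M‖ ≤ sSup {r : ℝ | ∃ h g : H, ‖h‖ ≤ 1 ∧ ‖g‖ ≤ 1 ∧
        r = ‖⟪C h, A h⟫_ℂ‖ + ‖⟪C g, A g⟫_ℂ‖ +
          4 * ‖⟪C ((1/2 : ℂ) • (h + g)), A ((1/2 : ℂ) • (h + g))⟫_ℂ‖} ∧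
      sSup {r : ℝ | ∃ h g : H, ‖h‖ ≤ 1 ∧ ‖g‖ ≤ 1 ∧
        r = ‖⟪C h, A h⟫_ℂ‖ + ‖⟪C g, A g⟫_ℂ‖ +
          4 * ‖⟪C ((1/2 : ℂ) • (h + g)), A ((1/2 : ℂ) • (h + g))⟫_ℂ‖} ≤
      6 * sSup {r : ℝ | ∃ h : H, ‖h‖ ≤ 1 ∧ r = ‖⟪C h, A h⟫_ℂ‖} := by
  set S := {r : ℝ | ∃ h g : H, ‖h‖ ≤ 1 ∧ ‖g‖ ≤ 1 ∧
        r = ‖⟪C h, A h⟫_ℂ‖ + ‖⟪C g, A g⟫_ℂ‖ +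
          4 * ‖⟪C ((1/2 : ℂ) • (h + g)), A ((1/2 : ℂ) • (h + g))⟫_ℂ‖}
  set T := {r : ℝ | ∃ h : H, ‖h‖ ≤ 1 ∧ r = ‖⟪C h, A h⟫_ℂ‖}
  have hCnorm := norm_eq_of_inner_map_map hCinner
  have hq := fun x (hx : ‖x‖ ≤ 1) => norm_inner_map_apply_le hCnorm A hx
  have hT : BddAbove T := ⟨‖A‖, by rintro _ ⟨h, hh, rfl⟩; exact hq h hh⟩
  have hS : BddAbove S := ⟨6 * ‖A‖, by
    rintro _ ⟨h, g, hh, hg, rfl⟩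
    linarith [hq h hh, hq g hg, hq _ (norm_half_smul_add_le_one hh hg)]⟩
  constructor
  · refine M.opNorm_le_of_norm_inner_le fun g x hg hx => ?_
    obtain ⟨h, hh, rfl⟩ : ∃ h, ‖h‖ ≤ 1 ∧ C h = x := ⟨C x, by rwa [hCnorm], hCinv x⟩
    rw [hM, inner_add_right, inner_map_map_adjoint_map hCinner,
      inner_map_add_inner_map_swap hCadd hCsmul A]
    refine le_trans ?_ (le_csSup hS ⟨h, g, hh, hg, rfl⟩)
    exact norm_four_mul_sub_sub_le _ _ _
  · refine csSup_le ⟨_, 0, 0, by simp, by simp, rfl⟩ ?_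
    rintro _ ⟨h, g, hh, hg, rfl⟩
    linarith [le_csSup hT ⟨h, hh, rfl⟩, le_csSup hT ⟨g, hg, rfl⟩,
      le_csSup hT ⟨_, norm_half_smul_add_le_one hh hg, rfl⟩]
end
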